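/- arXiv:math/0605234 — 6 statements merged into one kernel-verified Lean document; each statement's English description precedes it below -/
import Mathlib

section
/- Let p, k, r be positive integers with p and k odd and gcd(r, kp) = 1. If a, b ∈ ZMod (k·p) satisfy a + 2r²·(j−1)·p = b + 2r²·(t−1)·p in ZMod (k·p) for some 1 ≤ j, t ≤ k, and a ≡ b mod p implies a = b, then a ≡ b (mod p) and j = t. -/
/-- Key arithmetic step of Theorem 2: with `p`, `k` odd and `gcd(r, kp) = 1`, if
`a + 2r²(j−1)p = b + 2r²(t−1)p` in `ZMod (kp)` and agreement of `a`, `b` modulo `p`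
forces `a = b`, then `a ≡ b (mod p)` and `j = t`. -/
theorem stmt_4 (p k r : ℕ) (hp : 0 < p) (hk : 0 < k) (hr : 0 < r)
    (hpodd : Odd p) (hkodd : Odd k) (hgcd : Nat.gcd r (k * p) = 1)
    (j t : ℕ) (hj1 : 1 ≤ j) (hjk : j ≤ k) (ht1 : 1 ≤ t) (htk : t ≤ k)
    (a b : ZMod (k * p))
    (h : a + ((2 * r ^ 2 * (j - 1) * p : ℕ) : ZMod (k * p))
       = b + ((2 * r ^ 2 * (t - 1) * p : ℕ) : ZMod (k * p)))
    (hab : ZMod.castHom (dvd_mul_left p k) (ZMod p) a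
         = ZMod.castHom (dvd_mul_left p k) (ZMod p) b → a = b) :
    ZMod.castHom (dvd_mul_left p k) (ZMod p) a
      = ZMod.castHom (dvd_mul_left p k) (ZMod p) b ∧ j = t := by
  have hcast : ZMod.castHom (dvd_mul_left p k) (ZMod p) a
      = ZMod.castHom (dvd_mul_left p k) (ZMod p) b := by
    have h2 := congrArg (ZMod.castHom (dvd_mul_left p k) (ZMod p)) h
    rw [map_add, map_add, map_natCast, map_natCast] at h2
    simpa [Nat.cast_mul, ZMod.natCast_self] using h2
  refine ⟨hcast, ?_⟩
  have hab' : a = b := hab hcast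
  subst hab'
  have heq : ((2 * r ^ 2 * (j - 1) * p : ℕ) : ZMod (k * p))
      = ((2 * r ^ 2 * (t - 1) * p : ℕ) : ZMod (k * p)) := by
    exact add_left_cancel h
  have hmod : (2 * r ^ 2 * (j - 1) * p) ≡ (2 * r ^ 2 * (t - 1) * p) [MOD k * p] :=
    (ZMod.natCast_eq_natCast_iff _ _ _).mp heq
  have hdvd : ((k * p : ℕ) : ℤ) ∣ ((2 * r ^ 2 * (t - 1) * p : ℕ) : ℤ)
      - ((2 * r ^ 2 * (j - 1) * p : ℕ) : ℤ) := hmod.dvd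
  have hd2 : (k : ℤ) * p ∣ (2 * r ^ 2 * ((t : ℤ) - j)) * p := by
    have : ((2 * r ^ 2 * (t - 1) * p : ℕ) : ℤ) - ((2 * r ^ 2 * (j - 1) * p : ℕ) : ℤ)
        = (2 * r ^ 2 * ((t : ℤ) - j)) * p := by
      push_cast [Nat.cast_sub hj1, Nat.cast_sub ht1]
      ring
    rw [this] at hdvd
    exact_mod_cast hdvd
  have hpz : (p : ℤ) ≠ 0 := by exact_mod_cast hp.ne'
  have hdk : (k : ℤ) ∣ 2 * r ^ 2 * ((t : ℤ) - j) :=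
    (mul_dvd_mul_iff_right hpz).mp hd2
  have hcop : IsCoprime (2 * (r : ℤ) ^ 2) (k : ℤ) := by
    have h1 : Nat.Coprime r k := Nat.Coprime.coprime_dvd_right ⟨p, rfl⟩ hgcd
    have h2 : Nat.Coprime 2 k := Nat.coprime_two_left.mpr hkodd
    have : Nat.Coprime (2 * r ^ 2) k := Nat.Coprime.mul h2 (h1.pow_left 2)
    exact_mod_cast Nat.isCoprime_iff_coprime.mpr this
  have hdk2 : (k : ℤ) ∣ (t : ℤ) - j := (hcop.symm.dvd_of_dvd_mul_left hdk)
  have : (t : ℤ) - j = 0 := by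
    refine Int.eq_zero_of_abs_lt_dvd hdk2 ?_
    have h1 : (1 : ℤ) ≤ j := by exact_mod_cast hj1
    have h2 : (j : ℤ) ≤ k := by exact_mod_cast hjk
    have h3 : (1 : ℤ) ≤ t := by exact_mod_cast ht1
    have h4 : (t : ℤ) ≤ k := by exact_mod_cast htk
    rw [abs_sub_lt_iff]
    omega
  have : (j : ℤ) = t := by omega
  have : (j:ℤ) = t := this; exact_mod_cast this
end

section
/- The map sending a vertex-index pair (i, j) with 1 ≤ i ≤ p, 1 ≤ j ≤ k to ℓ(vᵢ) + 2r²(j−1)p mod kp is injective, where ℓ : Fin p → ZMod p lifts to distinct residues mod p, provided p, k are odd and gcd(r, kp) = 1. -/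
/-- If the labels `ℓ(vᵢ)` are distinct modulo `p`, `p` and `k` are odd, and
`gcd(r, kp) = 1`, then the induced labels `ℓ(vᵢ) + 2r²(j−1)p` of the vertices of `kG`
are distinct in `ZMod (kp)`. -/
theorem stmt_7 (p k r : ℕ) (hp : 0 < p) (hk : 0 < k) (hr : 0 < r)
    (hpodd : Odd p) (hkodd : Odd k) (hgcd : Nat.gcd r (k * p) = 1)
    (ℓ : Fin p → ZMod (k * p))
    (hℓ : Function.Injective (fun i => ZMod.castHom (dvd_mul_left p k) (ZMod p) (ℓ i))) :
    Function.Injective (fun x : Fin p × Fin k =>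
      ℓ x.1 + ((2 * r ^ 2 * x.2.val * p : ℕ) : ZMod (k * p))) := by
  rintro ⟨i, j⟩ ⟨i', j'⟩ h
  simp only at h
  have hi : i = i' := by
    apply hℓ
    have := congrArg (ZMod.castHom (dvd_mul_left p k) (ZMod p)) h
    simp only [map_add, map_natCast] at this
    simpa [Nat.cast_mul, ZMod.natCast_self, mul_zero] using this
  subst hi
  have h2 : ((2 * r ^ 2 * j.val * p : ℕ) : ZMod (k * p))
      = ((2 * r ^ 2 * j'.val * p : ℕ) : ZMod (k * p)) := add_left_cancel h
  rw [ZMod.natCast_eq_natCast_iff] at h2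
  have h3 : 2 * r ^ 2 * j.val ≡ 2 * r ^ 2 * j'.val [MOD k] :=
    Nat.ModEq.mul_right_cancel' hp.ne' h2
  -- 2 * r ^ 2 is coprime to k
  have hrk : Nat.Coprime r k := Nat.Coprime.coprime_dvd_right (dvd_mul_right k p) hgcd
  have h2k : Nat.Coprime 2 k := by
    simpa [Nat.coprime_two_left] using hkodd
  have hcop : Nat.Coprime k (2 * r ^ 2) :=
    Nat.Coprime.mul_right h2k.symm ((hrk.pow_left 2).symm)
  have h4 : j.val ≡ j'.val [MOD k] := Nat.ModEq.cancel_left_of_coprime hcop h3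
  have := (Nat.ModEq.eq_of_lt_of_lt h4 j.isLt j'.isLt)
  exact Prod.ext rfl (Fin.ext this)
end

section
/- If G is a 2r-regular edge graceful (p, q) graph with gcd(r, k·p) = 1 and k is odd, then the disjoint union kG of k disjoint copies of G is edge graceful. -/
/-- A finite multigraph (no loops): each edge has an unordered pair of distinct ends. -/
structure Multigraph (V E : Type) [Fintype V] [DecidableEq V] [Fintype E] where
  ends : E → Sym2 V
  loopless : ∀ e, ¬ (ends e).IsDiag

variable {V E : Type} [Fintype V] [DecidableEq V] [Fintype E]

/-- The edges incident with a vertex. -/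
def Multigraph.incident (G : Multigraph V E) (v : V) : Finset E :=
  Finset.univ.filter (fun e => v ∈ G.ends e)

/-- The degree of a vertex (no loops, so each incident edge counts once). -/
def Multigraph.degree (G : Multigraph V E) (v : V) : ℕ := (G.incident v).card

/-- Edge gracefulness: the edges can be labeled bijectively by `1, …, q` so that the
vertex labels induced by summing labels of incident edges modulo `p` are distinct. -/
def Multigraph.EdgeGraceful (G : Multigraph V E) : Prop :=
  ∃ ℓ : E ≃ Fin (Fintype.card E),
    Function.Injective (fun v : V =>
      ∑ e ∈ G.incident v, (((ℓ e).val + 1 : ℕ) : ZMod (Fintype.card V)))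

/-- The disjoint union of `k` copies of `G`. -/
def Multigraph.copies (G : Multigraph V E) (k : ℕ) : Multigraph (V × Fin k) (E × Fin k) where
  ends e := (G.ends e.1).map (fun v => (v, e.2))
  loopless e h := G.loopless e.1 (by
    have : Function.Injective (fun v : V => (v, e.2)) := fun a b hab => congrArg Prod.fst hab
    rwa [Sym2.isDiag_map this] at h)

/-! Copy `j` of an edge `e` gets label `ℓ e + q j`. As `G` is `2r`-regular, `q = r p`, so vertex
`(v, j)` of `kG` gets label `S v + 2r q j = S v + p (2r² j)`, where `S v` is the label of `v` in `G`.
Modulo `p` this recovers `v` by gracefulness of `G`; cancelling `S v` and then `p` leaves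
`2r² j ≡ 2r² j' (mod k)`, which recovers `j` because `2r²` is prime to `k`. -/

open Finset

namespace Multigraph

def inducedLabel (G : Multigraph V E) (ℓ : E → ℕ) (v : V) : ℕ :=
  ∑ e ∈ G.incident v, (ℓ e + 1)

theorem edgeGraceful_iff (G : Multigraph V E) :
    G.EdgeGraceful ↔ ∃ ℓ : E ≃ Fin (Fintype.card E), ∀ v w,
      G.inducedLabel (ℓ ·) v ≡ G.inducedLabel (ℓ ·) w [MOD Fintype.card V] → v = w := by
  simp only [EdgeGraceful, Function.Injective, inducedLabel, ← ZMod.natCast_eq_natCast_iff,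
    Nat.cast_sum]

theorem sum_degree (G : Multigraph V E) : ∑ v, G.degree v = 2 * Fintype.card E := by
  have hends : ∀ e, #{v | v ∈ G.ends e} = 2 := fun e => by
    rw [← Sym2.card_toFinset_of_not_isDiag _ (G.loopless e)]
    congr 1
    ext v
    simp
  simp only [degree, incident, card_filter]
  rw [sum_comm]
  simp only [← card_filter, hends, sum_const, card_univ, smul_eq_mul, mul_comm]

theorem card_edges_of_regular {G : Multigraph V E} {r : ℕ} (hreg : ∀ v, G.degree v = 2 * r) :
    Fintype.card E = r * Fintype.card V := by
  have h := G.sum_degree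
  simp only [hreg, sum_const, card_univ, smul_eq_mul] at h
  linarith

theorem incident_copies (G : Multigraph V E) (k : ℕ) (v : V) (j : Fin k) :
    (G.copies k).incident (v, j) = (G.incident v).map (.sectL E j) := by
  ext ⟨e, i⟩
  simp only [incident, copies, mem_filter, mem_univ, true_and, mem_map,
    Function.Embedding.sectL_apply, Sym2.mem_map, Prod.mk.injEq]
  constructor <;> rintro ⟨_, ha, rfl, rfl⟩ <;> exact ⟨_, ha, rfl, rfl⟩

end Multigraph

def copiesLabeling {E : Type} [Fintype E] (ℓ : E ≃ Fin (Fintype.card E)) (k : ℕ) :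
    E × Fin k ≃ Fin (Fintype.card (E × Fin k)) :=
  (ℓ.prodCongr (Equiv.refl _)).trans <| (Equiv.prodComm _ _).trans <|
    finProdFinEquiv.trans (finCongr (by simp [mul_comm]))

theorem copiesLabeling_apply_val {E : Type} [Fintype E] (ℓ : E ≃ Fin (Fintype.card E)) (k : ℕ)
    (e : E) (j : Fin k) :
    (copiesLabeling ℓ k (e, j) : ℕ) = ℓ e + Fintype.card E * j := by
  simp [copiesLabeling]

theorem Multigraph.inducedLabel_copies (G : Multigraph V E) (ℓ : E ≃ Fin (Fintype.card E))
    (k : ℕ) (v : V) (j : Fin k) :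
    (G.copies k).inducedLabel (copiesLabeling ℓ k ·) (v, j) =
      G.inducedLabel (ℓ ·) v + G.degree v * (Fintype.card E * j) := by
  simp only [inducedLabel, incident_copies, sum_map, Function.Embedding.sectL_apply,
    copiesLabeling_apply_val, degree, card_eq_sum_ones, sum_mul, ← sum_add_distrib]
  exact sum_congr rfl fun _ _ => by ring

theorem Multigraph.EdgeGraceful.copies {G : Multigraph V E} {r k : ℕ} (hEG : G.EdgeGraceful)
    (hreg : ∀ v, G.degree v = 2 * r) (hcop : Nat.Coprime (2 * r) k) :
    (G.copies k).EdgeGraceful := by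
  obtain ⟨ℓ, hinj⟩ := G.edgeGraceful_iff.mp hEG
  refine (G.copies k).edgeGraceful_iff.mpr ⟨copiesLabeling ℓ k, ?_⟩
  rintro ⟨v, j⟩ ⟨w, i⟩ h
  have hlabel : ∀ u (t : Fin k), (G.copies k).inducedLabel (copiesLabeling ℓ k ·) (u, t) =
      G.inducedLabel (ℓ ·) u + Fintype.card V * (2 * r * r * t) := fun u t => by
    rw [inducedLabel_copies, hreg]
    congr 1
    rw [card_edges_of_regular hreg]
    ring
  rw [hlabel, hlabel, Fintype.card_prod, Fintype.card_fin] at h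
  obtain rfl : v = w := hinj v w <| by
    simpa [Nat.ModEq, Nat.add_mul_mod_self_left] using h.of_mul_right k
  have hji : 2 * r * r * j ≡ 2 * r * r * i [MOD k] :=
    (h.add_left_cancel' _).mul_left_cancel' (Fintype.card_pos_iff.mpr ⟨v⟩).ne'
  have hcop' : Nat.Coprime (2 * r * r) k := hcop.mul_left hcop.coprime_mul_left
  exact Prod.ext rfl (Fin.ext ((hji.cancel_left_of_coprime hcop'.symm).eq_of_lt_of_lt j.2 i.2))

theorem stmt_8_general (p q r k : ℕ)
    (G : Multigraph (Fin p) (Fin q))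
    (hreg : ∀ v, G.degree v = 2 * r)
    (hEG : G.EdgeGraceful)
    (hgcd : Nat.gcd r (k * p) = 1) (hkodd : Odd k) :
    (G.copies k).EdgeGraceful :=
  hEG.copies hreg <| Nat.Coprime.mul_left hkodd.coprime_two_left <|
    Nat.Coprime.coprime_dvd_right (dvd_mul_right k p) hgcd

/-- Theorem 2: if `G` is a `2r`-regular edge graceful `(p,q)` graph with
`gcd(r, kp) = 1` and `k` odd, then `kG` is edge graceful. -/
theorem stmt_8 (p q r k : ℕ) (hr : 0 < r) (hk : 0 < k)
    (G : Multigraph (Fin p) (Fin q))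
    (hreg : ∀ v, G.degree v = 2 * r)
    (hEG : G.EdgeGraceful)
    (hgcd : Nat.gcd r (k * p) = 1) (hkodd : Odd k) :
    (G.copies k).EdgeGraceful :=
  stmt_8_general p q r k G hreg hEG hgcd hkodd
end

section
/- Let p, k, r = 2t+1 be positive integers. Define for 1 ≤ j ≤ t+1, 1 ≤ i ≤ p, 1 ≤ s ≤ k the labels ℓ(i,s,j) = ℓᵢʲ + (j−1)kp + (s−1)p, and for t+2 ≤ j ≤ 2t+1 the labels ℓ(i,s,j) = ℓᵢʲ + (3t+3−j)kp − p − (s−1)p, where for each j the values ℓᵢʲ (1 ≤ i ≤ p) are exactly {1, …, p}. Then the resulting rkp labels are pairwise distinct and form exactly the set {1, …, rkp}. -/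
/-- Block index for the relabeling. -/
def B9 (k t jv sv : ℕ) : ℕ :=
  if jv + 1 ≤ t + 1 then jv * k + sv else (3 * t + 2 - jv) * k - sv - 1

private lemma divmod_unique {k a b s s' : ℕ} (hs : s < k) (hs' : s' < k)
    (h : a * k + s = b * k + s') : a = b ∧ s = s' := by
  have h1 : (a * k + s) % k = (b * k + s') % k := by rw [h]
  simp only [Nat.mul_add_mod', Nat.mod_eq_of_lt hs, Nat.mod_eq_of_lt hs'] at h1
  subst h1
  have hk0 : 0 < k := by omega
  have hab : a * k = b * k := by omega
  exact ⟨Nat.eq_of_mul_eq_mul_right hk0 hab, rfl⟩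

private lemma B9_lt {k t jv sv : ℕ} (hk : 0 < k) (hj : jv < 2 * t + 1) (hs : sv < k) :
    B9 k t jv sv < (2 * t + 1) * k := by
  unfold B9
  split_ifs with h1
  · have hA : jv * k ≤ t * k := Nat.mul_le_mul_right k (by omega)
    have hB : (2 * t + 1) * k = t * k + t * k + k := by ring
    omega
  · have hA : (3 * t + 2 - jv) * k ≤ (2 * t + 1) * k := Nat.mul_le_mul_right k (by omega)
    have hB : k ≤ (2 * t + 1) * k := Nat.le_mul_of_pos_left k (by omega)
    omega

private lemma B9_inj {k t jv sv jv' sv' : ℕ} (hk : 0 < k) (hj : jv < 2 * t + 1)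
    (hj' : jv' < 2 * t + 1) (hs : sv < k) (hs' : sv' < k)
    (h : B9 k t jv sv = B9 k t jv' sv') : jv = jv' ∧ sv = sv' := by
  unfold B9 at h
  split_ifs at h with h1 h2 h2
  · exact divmod_unique hs hs' h
  · -- jv ≤ t, jv' ≥ t+1 : contradiction
    have hA : jv * k ≤ t * k := Nat.mul_le_mul_right k (by omega)
    have hB : (t + 2) * k ≤ (3 * t + 2 - jv') * k := Nat.mul_le_mul_right k (by omega)
    have hC : (t + 2) * k = t * k + k + k := by ring
    omega
  · -- jv ≥ t+1, jv' ≤ t : contradiction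
    have hA : jv' * k ≤ t * k := Nat.mul_le_mul_right k (by omega)
    have hB : (t + 2) * k ≤ (3 * t + 2 - jv) * k := Nat.mul_le_mul_right k (by omega)
    have hC : (t + 2) * k = t * k + k + k := by ring
    omega
  · set M := 3 * t + 2 - jv with hM
    set M' := 3 * t + 2 - jv' with hM'
    have e : (M - 1) * k = M * k - k := by rw [Nat.sub_mul, one_mul]
    have e' : (M' - 1) * k = M' * k - k := by rw [Nat.sub_mul, one_mul]
    have hMk : k ≤ M * k := Nat.le_mul_of_pos_left k (by omega)
    have hM'k : k ≤ M' * k := Nat.le_mul_of_pos_left k (by omega)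
    have h' : (M - 1) * k + (k - 1 - sv) = (M' - 1) * k + (k - 1 - sv') := by omega
    have := divmod_unique (k := k) (by omega) (by omega) h'
    omega

private lemma val_decomp {p k t : ℕ} (hk : 0 < k) {ℓ jv sv : ℕ}
    (hj : jv < 2 * t + 1) (hs : sv < k) :
    (if jv + 1 ≤ t + 1 then ℓ + jv * (k * p) + sv * p
     else ℓ + (3 * t + 3 - (jv + 1)) * (k * p) - p - sv * p)
      = B9 k t jv sv * p + ℓ := by
  unfold B9
  split_ifs with h1
  · ring
  · have e1 : 3 * t + 3 - (jv + 1) = 3 * t + 2 - jv := by omega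
    rw [e1]
    set m := 3 * t + 2 - jv with hm
    have hmk : sv + 1 ≤ m * k := le_trans hs (Nat.le_mul_of_pos_left k (by omega))
    have h1' : (m * k - sv - 1) * p = m * k * p - sv * p - p := by
      rw [Nat.sub_mul, Nat.sub_mul, one_mul]
    have h2 : (sv + 1) * p ≤ m * k * p := Nat.mul_le_mul_right p hmk
    have h3 : (sv + 1) * p = sv * p + p := by ring
    have h4 : m * (k * p) = m * k * p := by ring
    omega

private lemma split_eq {B B' a b p : ℕ} (ha1 : 1 ≤ a) (ha2 : a ≤ p) (hb1 : 1 ≤ b)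
    (hb2 : b ≤ p) (h : B * p + a = B' * p + b) : B = B' ∧ a = b := by
  rcases lt_trichotomy B B' with hlt | heq | hgt
  · have h1 : (B + 1) * p ≤ B' * p := Nat.mul_le_mul_right p hlt
    have h2 : (B + 1) * p = B * p + p := by ring
    omega
  · subst heq; omega
  · have h1 : (B' + 1) * p ≤ B * p := Nat.mul_le_mul_right p hgt
    have h2 : (B' + 1) * p = B' * p + p := by ring
    omega

/-- Case 1 of Theorem 5 (`r = 2t+1`): given stria labels `L j` whose values for each
stria `j` are exactly `{1, …, p}`, the relabeling
`ℓ(i,s,j) = L j i + (j−1)kp + (s−1)p` for `1 ≤ j ≤ t+1` and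
`ℓ(i,s,j) = L j i + (3t+3−j)kp − p − (s−1)p` for `t+2 ≤ j ≤ 2t+1`
(here indices are 0-based: `j = jv+1`, `s = sv+1`) is a bijection onto `{1, …, rkp}`. -/
theorem stmt_9 (p k r t : ℕ) (hp : 0 < p) (hk : 0 < k) (hr : 0 < r)
    (hrt : r = 2 * t + 1)
    (L : Fin r → Fin p → ℕ)
    (hL : ∀ j : Fin r, Finset.image (L j) Finset.univ = Finset.Icc 1 p) :
    Function.Injective (fun x : Fin p × Fin k × Fin r =>
      if x.2.2.val + 1 ≤ t + 1 then
        L x.2.2 x.1 + x.2.2.val * (k * p) + x.2.1.val * p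
      else
        L x.2.2 x.1 + (3 * t + 3 - (x.2.2.val + 1)) * (k * p) - p - x.2.1.val * p)
    ∧ Finset.image (fun x : Fin p × Fin k × Fin r =>
      if x.2.2.val + 1 ≤ t + 1 then
        L x.2.2 x.1 + x.2.2.val * (k * p) + x.2.1.val * p
      else
        L x.2.2 x.1 + (3 * t + 3 - (x.2.2.val + 1)) * (k * p) - p - x.2.1.val * p)
      Finset.univ = Finset.Icc 1 (r * k * p) := by
  have hbound : ∀ (j : Fin r) (i : Fin p), 1 ≤ L j i ∧ L j i ≤ p := by
    intro j i
    have hmem : L j i ∈ Finset.Icc 1 p := by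
      rw [← hL j]; exact Finset.mem_image_of_mem _ (Finset.mem_univ i)
    simpa [Finset.mem_Icc] using hmem
  have hLinj : ∀ j : Fin r, Function.Injective (L j) := by
    intro j
    have hcard : (Finset.image (L j) Finset.univ).card = (Finset.univ : Finset (Fin p)).card := by
      rw [hL j, Nat.card_Icc, Finset.card_univ, Fintype.card_fin]; omega
    have hinjOn := Finset.injOn_of_card_image_eq hcard
    intro a b hab
    exact hinjOn (Finset.mem_coe.mpr (Finset.mem_univ a)) (Finset.mem_coe.mpr (Finset.mem_univ b)) hab
  have hjlt : ∀ j : Fin r, (j : ℕ) < 2 * t + 1 := fun j => hrt ▸ j.isLt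
  have hval : ∀ x : Fin p × Fin k × Fin r,
      (if x.2.2.val + 1 ≤ t + 1 then
        L x.2.2 x.1 + x.2.2.val * (k * p) + x.2.1.val * p
      else
        L x.2.2 x.1 + (3 * t + 3 - (x.2.2.val + 1)) * (k * p) - p - x.2.1.val * p)
      = B9 k t x.2.2.val x.2.1.val * p + L x.2.2 x.1 :=
    fun x => val_decomp hk (hjlt x.2.2) x.2.1.isLt
  have hinj : Function.Injective (fun x : Fin p × Fin k × Fin r =>
      if x.2.2.val + 1 ≤ t + 1 then
        L x.2.2 x.1 + x.2.2.val * (k * p) + x.2.1.val * p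
      else
        L x.2.2 x.1 + (3 * t + 3 - (x.2.2.val + 1)) * (k * p) - p - x.2.1.val * p) := by
    intro x y hxy
    simp only [hval] at hxy
    obtain ⟨hB, ha⟩ := split_eq (hbound x.2.2 x.1).1 (hbound x.2.2 x.1).2
      (hbound y.2.2 y.1).1 (hbound y.2.2 y.1).2 hxy
    obtain ⟨hj, hs⟩ := B9_inj hk (hjlt x.2.2) (hjlt y.2.2) x.2.1.isLt y.2.1.isLt hB
    have hj' : x.2.2 = y.2.2 := Fin.ext hj
    have hs' : x.2.1 = y.2.1 := Fin.ext hs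
    rw [hj'] at ha
    have hi : x.1 = y.1 := hLinj y.2.2 ha
    exact Prod.ext hi (Prod.ext hs' hj')
  refine ⟨hinj, ?_⟩
  apply Finset.eq_of_subset_of_card_le
  · intro n hn
    obtain ⟨x, -, hx⟩ := Finset.mem_image.mp hn
    rw [hval x] at hx
    have hBlt : B9 k t x.2.2.val x.2.1.val < (2 * t + 1) * k :=
      B9_lt hk (hjlt x.2.2) x.2.1.isLt
    have h1 : (B9 k t x.2.2.val x.2.1.val + 1) * p ≤ (2 * t + 1) * k * p :=
      Nat.mul_le_mul_right p hBlt
    have h2 : (B9 k t x.2.2.val x.2.1.val + 1) * p = B9 k t x.2.2.val x.2.1.val * p + p := by ring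
    have hb := hbound x.2.2 x.1
    rw [Finset.mem_Icc]
    subst hrt
    omega
  · rw [Finset.card_image_of_injective _ hinj, Nat.card_Icc, Finset.card_univ]
    simp [Fintype.card_prod, hrt]
    ring_nf
    omega
end

section
/- Let p, k be odd positive integers and let ℓ : Fin p → ZMod (k·p) be such that the reductions of ℓ(i) modulo p are pairwise distinct. Then the map (i, s) ↦ ℓ(i) + 2p·s from Fin p × Fin k to ZMod (k·p) is injective. -/
/-- If the labels `ℓ(i)` are distinct modulo `p` and `p`, `k` are odd, the map
`(i, s) ↦ ℓ(i) + 2p·s` into `ZMod (kp)` is injective. -/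
theorem stmt_11 (p k : ℕ) (hp : 0 < p) (hk : 0 < k)
    (hpodd : Odd p) (hkodd : Odd k)
    (ℓ : Fin p → ZMod (k * p))
    (hℓ : Function.Injective (fun i => ZMod.castHom (dvd_mul_left p k) (ZMod p) (ℓ i))) :
    Function.Injective (fun x : Fin p × Fin k =>
      ℓ x.1 + ((2 * p * x.2.val : ℕ) : ZMod (k * p))) := by
  rintro ⟨i, s⟩ ⟨j, t⟩ h
  simp only at h
  have hcast : ∀ (n : Fin k), ZMod.castHom (dvd_mul_left p k) (ZMod p)
      (((2 * p * n.val : ℕ) : ZMod (k * p))) = 0 := by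
    intro n
    rw [map_natCast]
    haveI : NeZero p := ⟨hp.ne'⟩
    exact (ZMod.natCast_eq_zero_iff _ _).mpr ⟨2 * n.val, by ring⟩
  have hij : i = j := by
    apply hℓ
    have := congrArg (ZMod.castHom (dvd_mul_left p k) (ZMod p)) h
    rw [map_add, map_add, hcast, hcast, add_zero, add_zero] at this
    exact this
  subst hij
  have h2 : ((2 * p * s.val : ℕ) : ZMod (k * p)) = ((2 * p * t.val : ℕ) : ZMod (k * p)) :=
    add_left_cancel h
  rw [ZMod.natCast_eq_natCast_iff] at h2
  have hdvd : (↑(k * p) : ℤ) ∣ (2 * p * t.val : ℤ) - (2 * p * s.val : ℤ) := by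
    have := (Nat.modEq_iff_dvd (n := k * p)).mp h2
    exact_mod_cast this
  have hpz : (0:ℤ) < (p:ℤ) := by exact_mod_cast hp
  have hk2 : (k:ℤ) ∣ 2 * ((t.val : ℤ) - s.val) := by
    rcases hdvd with ⟨c, hc⟩
    refine ⟨c, ?_⟩
    have : (p:ℤ) * (2 * ((t.val : ℤ) - s.val)) = (p:ℤ) * ((k:ℤ) * c) := by
      push_cast at hc ⊢; ring_nf; ring_nf at hc; linarith
    have := mul_left_cancel₀ (ne_of_gt hpz) this
    linarith [this]
  have hkts : (k:ℤ) ∣ ((t.val : ℤ) - s.val) := by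
    have hco : IsCoprime (k:ℤ) 2 := by
      rw [Int.isCoprime_iff_gcd_eq_one]
      rw [show ((2:ℤ)) = ((2:ℕ):ℤ) by norm_num, Int.gcd_natCast_natCast]
      exact hkodd.coprime_two_right
    exact hco.dvd_of_dvd_mul_left hk2
  have hst : s = t := by
    have hb1 : (s.val : ℤ) < k := by exact_mod_cast s.isLt
    have hb2 : (t.val : ℤ) < k := by exact_mod_cast t.isLt
    have hs0 : (0:ℤ) ≤ s.val := Int.natCast_nonneg _
    have ht0 : (0:ℤ) ≤ t.val := Int.natCast_nonneg _
    have h0 : ((t.val : ℤ) - s.val) = 0 :=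
      Int.eq_zero_of_abs_lt_dvd hkts (abs_lt.mpr ⟨by linarith, by linarith⟩)
    have : s.val = t.val := by omega
    exact Fin.ext this
  rw [hst]
end

section
/- If G is a 2r-regular striaeform edge graceful (p,q) graph and k is an odd positive integer, then kG is edge graceful. -/
variable {V E : Type} [Fintype V] [DecidableEq V] [Fintype E]

variable [DecidableEq E]

/-- `G` is striaeform: it has a 2-factorization `S₁, …, S_r` (every vertex is incident
with exactly 2 edges of each factor) and an edge graceful labeling such that the labels
of the `p` edges of each `Sⱼ`, reduced modulo `p`, are exactly `{1, 2, …, p}`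
(i.e. all residues modulo `p`). -/
def Multigraph.Striaeform [Nonempty V] (G : Multigraph V E) (r : ℕ) : Prop :=
  haveI : NeZero (Fintype.card V) := ⟨Fintype.card_ne_zero⟩
  ∃ (f : E → Fin r) (ℓ : E ≃ Fin (Fintype.card E)),
    (∀ (v : V) (j : Fin r),
        (Finset.univ.filter (fun e => f e = j ∧ v ∈ G.ends e)).card = 2) ∧
    Function.Injective (fun v : V =>
      ∑ e ∈ G.incident v, (((ℓ e).val + 1 : ℕ) : ZMod (Fintype.card V))) ∧
    (∀ j : Fin r,
      Finset.image (fun e => (((ℓ e).val + 1 : ℕ) : ZMod (Fintype.card V)))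
        (Finset.univ.filter (fun e => f e = j)) = Finset.univ)

/-!
Fix units `a₀, …, a_{r-1}` of `ZMod k` with sum `1` (they exist because `2` is a unit, `k` being
odd), and give copy `i` of an edge `e` of the factor `Sⱼ` the label whose digits in the mixed
radix `(r, k, p)` are `(j, aⱼ i, c e - 1)`, where `c e` is the residue modulo `p` of its old
label. Factor and residue identify the edges with `Fin r × ZMod p`, so this is a bijection onto
`{1, …, kq}`. Modulo `pk`, the vertex sum at `(v, i)` is `A v + p B`, where `A v` reduces modulo
`p` to the old label of `v`, and `B ≡ 2 i` modulo `k` because `v` meets every factor twice. So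
the vertex sum determines `v`, and then `i` since `2` is a unit modulo `k`.
-/

open Finset Function

omit [DecidableEq E]

theorem exists_units_sum_eq_one {R : Type*} [Ring R] (h2 : IsUnit (2 : R)) :
    ∀ {r : ℕ}, 0 < r → ∃ a : Fin r → Rˣ, ∑ j, (a j : R) = 1
  | 1, _ => ⟨1, by simp⟩
  | 2, _ => ⟨![h2.unit, -1], by norm_num [Fin.sum_univ_two, ← sub_eq_add_neg]⟩
  | r + 3, _ => by
    obtain ⟨a, ha⟩ := exists_units_sum_eq_one h2 (r := r + 1) r.succ_pos
    exact ⟨Fin.cons 1 (Fin.cons (-1) a), by simp [Fin.sum_univ_succ, ha]⟩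

theorem ZMod.isUnit_two_of_odd {k : ℕ} (hk : Odd k) : IsUnit (2 : ZMod k) := by
  exact_mod_cast (ZMod.isUnit_iff_coprime 2 k).2 (Nat.coprime_two_left.2 hk)

theorem ZMod.val_finEquiv_symm {n : ℕ} [NeZero n] (x : ZMod n) :
    ((ZMod.finEquiv n).symm x : ℕ) = x.val := by
  obtain ⟨m, rfl⟩ := Nat.exists_eq_succ_of_ne_zero (NeZero.ne n)
  rfl

theorem eq_and_eq_of_add_mul_modEq {α β : Type*} {p k : ℕ} (hp : p ≠ 0) {A : α → ℕ}
    {B : α → β → ℕ} (hA : Injective fun x => (A x : ZMod p))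
    (hB : ∀ x, Injective fun y => (B x y : ZMod k)) {x x' : α} {y y' : β}
    (h : A x + p * B x y ≡ A x' + p * B x' y' [MOD p * k]) : x = x' ∧ y = y' := by
  obtain rfl : x = x' := hA <| (ZMod.natCast_eq_natCast_iff _ _ _).2 <| by
    simpa [Nat.ModEq, Nat.add_mul_mod_self_left] using h.of_mul_right k
  exact ⟨rfl, hB x <| (ZMod.natCast_eq_natCast_iff _ _ _).2 <|
    Nat.ModEq.mul_left_cancel' hp (Nat.ModEq.add_left_cancel' _ h)⟩

theorem ZMod.natCast_fin_injective (k : ℕ) : Injective fun i : Fin k => ((i : ℕ) : ZMod k) :=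
  fun i j h => Fin.ext <| by
    simpa [Nat.mod_eq_of_lt] using (ZMod.natCast_eq_natCast_iff' _ _ _).1 h

theorem Finset.sum_comp_of_card_fiber_eq {ι κ M : Type*} [AddCommMonoid M] [Fintype κ]
    [DecidableEq κ] {s : Finset ι} {f : ι → κ} {n : ℕ} (h : ∀ j, #{x ∈ s | f x = j} = n)
    (g : κ → M) : ∑ x ∈ s, g (f x) = n • ∑ j, g j := by
  simp only [← sum_fiberwise' s f g, sum_const, h, smul_sum]

section CopyLabel

variable {ι : Type*} {r k p : ℕ} [NeZero k] [NeZero p] (f : ι → Fin r) (c : ι → ZMod p)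
  (a : Fin r → (ZMod k)ˣ)

def copyLabel (x : ι × Fin k) : Fin (r * (k * p)) :=
  finProdFinEquiv (f x.1, finProdFinEquiv
    ((ZMod.finEquiv k).symm (a (f x.1) * (x.2 : ℕ)), (ZMod.finEquiv p).symm (c x.1 - 1)))

theorem val_copyLabel (x : ι × Fin k) : (copyLabel f c a x : ℕ) =
    (c x.1 - 1).val + p * (a (f x.1) * (x.2 : ℕ) : ZMod k).val + p * k * f x.1 := by
  simp only [copyLabel, finProdFinEquiv_apply_val, ZMod.val_finEquiv_symm]
  ring

theorem copyLabel_injective (hfc : Injective fun e => (f e, c e)) :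
    Injective (copyLabel f c a) := by
  rintro ⟨e, i⟩ ⟨e', i'⟩ h
  simp only [copyLabel, EmbeddingLike.apply_eq_iff_eq, Prod.mk.injEq] at h
  obtain ⟨hf, hw, hc⟩ := h
  obtain rfl : e = e' := hfc (Prod.ext hf (sub_left_inj.1 hc))
  rw [Units.mul_right_inj] at hw
  rw [ZMod.natCast_fin_injective k hw]

theorem sum_copyLabel_modEq (s : Finset ι) (i : Fin k) :
    ∑ e ∈ s, ((copyLabel f c a (e, i) : ℕ) + 1) ≡
      ∑ e ∈ s, ((c e - 1).val + 1) + p * ∑ e ∈ s, (a (f e) * (i : ℕ) : ZMod k).val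
      [MOD p * k] := by
  rw [mul_sum, ← sum_add_distrib]
  refine Nat.ModEq.sum fun e _ => ?_
  calc (copyLabel f c a (e, i) : ℕ) + 1
      = (c e - 1).val + 1 + p * (a (f e) * (i : ℕ) : ZMod k).val + p * k * f e := by
        rw [val_copyLabel]; ring
    _ ≡ _ [MOD p * k] := Nat.add_mul_mod_self_left _ _ _

end CopyLabel

namespace Multigraph

theorem card_filter_mem_ends (G : Multigraph V E) (e : E) : #{v | v ∈ G.ends e} = 2 := by
  rw [← Sym2.card_toFinset_of_not_isDiag _ (G.loopless e)]
  congr 1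
  ext v
  simp

theorem sum_card_filter_mem_ends (G : Multigraph V E) (s : Finset E) :
    ∑ v, #{e ∈ s | v ∈ G.ends e} = 2 * #s := by
  have := sum_card_bipartiteAbove_eq_sum_card_bipartiteBelow (s := s) (t := univ)
    (r := fun e v => v ∈ G.ends e)
  simp only [bipartiteAbove, bipartiteBelow, G.card_filter_mem_ends, sum_const, smul_eq_mul] at this
  rw [← this, mul_comm]

theorem copies_incident (G : Multigraph V E) (k : ℕ) (v : V) (i : Fin k) :
    (G.copies k).incident (v, i) = (G.incident v).map (Embedding.sectL E i) := by
  ext ⟨e, i'⟩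
  simp [incident, copies, Sym2.mem_map, eq_comm]

theorem Striaeform.exists_factorization [Nonempty V] {G : Multigraph V E} {r : ℕ}
    (h : G.Striaeform r) :
    ∃ (f : E → Fin r) (c : E → ZMod (Fintype.card V)), Bijective (fun e => (f e, c e)) ∧
      (∀ v j, #{e ∈ G.incident v | f e = j} = 2) ∧
      Injective fun v => ∑ e ∈ G.incident v, c e := by
  obtain ⟨f, ℓ, hf, hinj, hcover⟩ := h
  have hf' : ∀ v j, #{e ∈ G.incident v | f e = j} = 2 := by
    intro v j
    rw [← hf v j, incident, filter_filter]
    simp_rw [and_comm]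
  have hfibre : ∀ j, #{e | f e = j} = Fintype.card V := by
    intro j
    have := G.sum_card_filter_mem_ends {e | f e = j}
    simp only [filter_filter, hf, sum_const, card_univ, smul_eq_mul] at this
    omega
  refine ⟨f, fun e => ((ℓ e).val + 1 : ℕ), ?_, hf', hinj⟩
  rw [Fintype.bijective_iff_surjective_and_card]
  refine ⟨fun ⟨j, x⟩ => ?_, ?_⟩
  · obtain ⟨e, he, rfl⟩ := mem_image.1 (hcover j ▸ mem_univ x)
    exact ⟨e, by simp_all⟩
  · rw [← card_univ, card_eq_sum_card_fiberwise (fun e _ => mem_univ (f e))]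
    simp [hfibre]

theorem copies_edgeGraceful_of_factorization (G : Multigraph V E) [Nonempty V] {r k : ℕ}
    (hr : 0 < r) (hk : Odd k)
    (f : E → Fin r) (c : E → ZMod (Fintype.card V)) (hfc : Bijective fun e => (f e, c e))
    (hf : ∀ v j, #{e ∈ G.incident v | f e = j} = 2)
    (hc : Injective fun v => ∑ e ∈ G.incident v, c e) : (G.copies k).EdgeGraceful := by
  have : NeZero k := ⟨hk.pos.ne'⟩
  obtain ⟨a, ha⟩ := exists_units_sum_eq_one (ZMod.isUnit_two_of_odd hk) hr
  have hcard : r * (k * Fintype.card V) = Fintype.card (E × Fin k) := by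
    rw [Fintype.card_prod, Fintype.card_of_bijective hfc, Fintype.card_prod, Fintype.card_fin,
      ZMod.card, Fintype.card_fin]
    ring
  have hA : Injective fun v => ((∑ e ∈ G.incident v, ((c e - 1).val + 1) : ℕ) :
      ZMod (Fintype.card V)) := by
    simpa using hc
  have hB : ∀ v, Injective fun i : Fin k =>
      ((∑ e ∈ G.incident v, (a (f e) * (i : ℕ) : ZMod k).val : ℕ) : ZMod k) := by
    intro v i i' h
    simp only [Nat.cast_sum, ZMod.natCast_val, ZMod.cast_id', id, ← sum_mul,
      sum_comp_of_card_fiber_eq (hf v) (fun j => (a j : ZMod k)), ha] at h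
    exact ZMod.natCast_fin_injective k
      ((ZMod.isUnit_two_of_odd hk).mul_left_cancel (by simpa using h))
  refine ⟨Equiv.ofBijective (fun x => Fin.cast hcard (copyLabel f c a x))
    ((Fintype.bijective_iff_injective_and_card _).2 ⟨?_, by simp⟩), ?_⟩
  · exact (Fin.cast_injective hcard).comp (copyLabel_injective f c a hfc.1)
  rintro ⟨v, i⟩ ⟨v', i'⟩ h
  simp only [copies_incident, sum_map, Embedding.sectL_apply, Equiv.ofBijective_apply,
    Fin.val_cast, ← Nat.cast_sum, ZMod.natCast_eq_natCast_iff, Fintype.card_prod,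
    Fintype.card_fin] at h
  obtain ⟨rfl, rfl⟩ := eq_and_eq_of_add_mul_modEq (NeZero.ne _) hA hB
    ((sum_copyLabel_modEq f c a _ i).symm.trans (h.trans (sum_copyLabel_modEq f c a _ i')))
  rfl

end Multigraph

theorem stmt_12_general (p q r k : ℕ) (hp : 0 < p) (hr : 0 < r)
    (hpe : Nonempty (Fin p) := Fin.pos_iff_nonempty.mp hp)
    (G : Multigraph (Fin p) (Fin q))
    (hstr : G.Striaeform r)
    (hkodd : Odd k) :
    (G.copies k).EdgeGraceful := by
  obtain ⟨f, c, hfc, hf, hc⟩ := hstr.exists_factorization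
  exact G.copies_edgeGraceful_of_factorization hr hkodd f c hfc hf hc

/-- Theorem 5: if `G` is a `2r`-regular striaeform edge graceful `(p,q)` graph and
`k` is odd, then `kG` is edge graceful. -/
theorem stmt_12 (p q r k : ℕ) (hp : 0 < p) (hr : 0 < r) (hk : 0 < k)
    (hpe : Nonempty (Fin p) := Fin.pos_iff_nonempty.mp hp)
    (G : Multigraph (Fin p) (Fin q))
    (hreg : ∀ v, G.degree v = 2 * r)
    (hstr : G.Striaeform r)
    (hkodd : Odd k) :
    (G.copies k).EdgeGraceful :=
  stmt_12_general p q r k hp hr hpe G hstr hkodd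
end
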